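/- Let p be a prime and m a natural number. For every natural number k, the element (p)_q^k · (k)_{q^p}! · (⌊pk/p^m⌋)_{q^{p^m}}! / ((⌊k/p^m⌋)_{q^{p^{m+1}}}! · (pk)_q!) of ℚ(q) lies in the subring ℤ[q]_{(p,q−1)}. -/

import Mathlib

noncomputable section

open Polynomial

/-- `ℤ[q]`, the polynomial ring in one variable `q` over `ℤ`. -/
abbrev Zq : Type := Polynomial ℤ

/-- `ℚ(q)`, realized as the fraction field of `ℤ[q]`. -/
abbrev Qq : Type := FractionRing Zq

/-- The canonical embedding `ℤ[q] → ℚ(q)`. -/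
def ι : Zq →+* Qq := algebraMap Zq Qq

/-- The image of the variable `q` in `ℚ(q)`. -/
def qQ : Qq := ι X

/-- The `q^a`-integer `(n)_{q^a} = 1 + q^a + ⋯ + q^{a(n-1)}` in `ℤ[q]`. -/
def qInt (a n : ℕ) : Zq := ∑ j ∈ Finset.range n, X ^ (a * j)

/-- The `q^a`-factorial `(n)_{q^a}! = ∏_{i=1}^{n} (i)_{q^a}` in `ℤ[q]`. -/
def qFact (a n : ℕ) : Zq := ∏ i ∈ Finset.range n, qInt a (i + 1)

/-- The prime ideal `(p, q - 1)` of `ℤ[q]`. -/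
def pqIdeal (p : ℕ) : Ideal Zq := Ideal.span {C (p : ℤ), X - 1}

/-- Membership in the localization `ℤ[q]_{(p,q-1)}`, viewed inside `ℚ(q)`:
`x = a / b` with `b ∉ (p, q-1)`. -/
def InLoc (p : ℕ) (x : Qq) : Prop :=
  ∃ a b : Zq, b ∉ pqIdeal p ∧ x * ι b = ι a

/-- Being a unit of the localization `ℤ[q]_{(p,q-1)}`, viewed inside `ℚ(q)`:
`x = a / b` with `a, b ∉ (p, q-1)`. -/
def IsLocUnit (p : ℕ) (x : Qq) : Prop :=
  ∃ a b : Zq, a ∉ pqIdeal p ∧ b ∉ pqIdeal p ∧ x * ι b = ι a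

/-- The Gaussian `q`-binomial coefficient `(k choose k')_q` as an element of `ℚ(q)`. -/
def qBinomF (k k' : ℕ) : Qq :=
  ι (qFact 1 k) / (ι (qFact 1 k') * ι (qFact 1 (k - k')))

/-- The level-`m` coefficient `{k choose k'}_{(m),q}` as an element of `ℚ(q)`. -/
def braceC (p m k k' : ℕ) : Qq :=
  ι (qFact (p ^ m) (k / p ^ m)) /
    (ι (qFact (p ^ m) (k' / p ^ m)) * ι (qFact (p ^ m) ((k - k') / p ^ m)))

/-- The level-`m` coefficient `⟨k choose k'⟩_{(m),q}` as an element of `ℚ(q)`. -/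
def angleC (p m k k' : ℕ) : Qq := qBinomF k k' * (braceC p m k k')⁻¹

/-!
Every `q`-integer `(pj)_{q^a}` factors as `(p)_{q^a} (j)_{q^{ap}}`, so `(n)_{q^a}!` splits as
`(p)_{q^a}^{⌊n/p⌋} (⌊n/p⌋)_{q^{ap}}!` times the product of the `(i)_{q^a}` with `p ∤ i`. The latter
evaluates at `q = 1` to an integer prime to `p`, hence lies outside `(p, q - 1)`. Applying the
splitting to `(pk)_q!` and to `(⌊pk/p^m⌋)_{q^{p^m}}!` (note `⌊⌊pk/p^m⌋/p⌋ = ⌊k/p^m⌋`) cancels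
everything except such a unit in the denominator.
-/

lemma qInt_add (a m n : ℕ) : qInt a (m + n) = qInt a m + X ^ (a * m) * qInt a n := by
  simp only [qInt, Finset.sum_range_add, Finset.mul_sum, mul_add, pow_add]

lemma qInt_succ (a n : ℕ) : qInt a (n + 1) = qInt a n + X ^ (a * n) :=
  Finset.sum_range_succ _ _

lemma qInt_mul (a p n : ℕ) : qInt a (p * n) = qInt a p * qInt (a * p) n := by
  induction n with
  | zero => simp [qInt]
  | succ n ih =>
    rw [mul_add_one, qInt_add, ih, qInt_succ, mul_add, mul_comm (X ^ _), mul_assoc a p n]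

lemma eval_one_qInt (a n : ℕ) : (qInt a n).eval 1 = n := by
  simp [qInt, eval_finsetSum]

lemma qInt_ne_zero (a : ℕ) {n : ℕ} (hn : n ≠ 0) : qInt a n ≠ 0 :=
  fun h => hn (by simpa [h] using (eval_one_qInt a n).symm)

lemma qFact_ne_zero (a n : ℕ) : qFact a n ≠ 0 :=
  Finset.prod_ne_zero_iff.mpr fun i _ => qInt_ne_zero a i.succ_ne_zero

lemma qFact_succ (a n : ℕ) : qFact a (n + 1) = qFact a n * qInt a (n + 1) :=
  Finset.prod_range_succ _ _

def qFactPrimeTo (p a n : ℕ) : Zq :=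
  ∏ i ∈ Finset.range n, if p ∣ i + 1 then 1 else qInt a (i + 1)

lemma qFactPrimeTo_succ (p a n : ℕ) :
    qFactPrimeTo p a (n + 1) = qFactPrimeTo p a n * if p ∣ n + 1 then 1 else qInt a (n + 1) :=
  Finset.prod_range_succ _ _

lemma qFact_eq_qInt_pow_mul_qFact_mul_qFactPrimeTo (p a n : ℕ) :
    qFact a n = qInt a p ^ (n / p) * qFact (a * p) (n / p) * qFactPrimeTo p a n := by
  induction n with
  | zero => simp [qFact, qFactPrimeTo]
  | succ n ih =>
    rw [qFact_succ, ih, qFactPrimeTo_succ, Nat.succ_div]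
    split_ifs with h
    · have hn : n + 1 = p * (n / p + 1) := by
        rw [← Nat.succ_div_of_dvd h, Nat.mul_div_cancel' h]
      rw [hn, qInt_mul, qFact_succ]
      ring
    · simp only [add_zero]; ring

lemma eval_one_dvd_of_mem_pqIdeal {p : ℕ} {x : Zq} (hx : x ∈ pqIdeal p) :
    (p : ℤ) ∣ x.eval 1 := by
  suffices pqIdeal p ≤ (Ideal.span {(p : ℤ)}).comap (evalRingHom 1) from
    Ideal.mem_span_singleton.mp (this hx)
  rw [pqIdeal, Ideal.span_le, Set.insert_subset_iff, Set.singleton_subset_iff]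
  simp

lemma qFactPrimeTo_notMem_pqIdeal {p : ℕ} (hp : p.Prime) (a n : ℕ) :
    qFactPrimeTo p a n ∉ pqIdeal p := by
  intro h
  have hdvd := eval_one_dvd_of_mem_pqIdeal h
  rw [qFactPrimeTo, eval_prod, (Nat.prime_iff_prime_int.mp hp).dvd_finsetProd_iff] at hdvd
  obtain ⟨i, -, hi⟩ := hdvd
  split_ifs at hi with hpi
  · exact Nat.prime_iff_prime_int.mp hp |>.not_dvd_one (by simpa using hi)
  · rw [eval_one_qInt] at hi
    exact hpi (Int.natCast_dvd_natCast.mp hi)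

lemma qFactPrimeTo_ne_zero {p : ℕ} (hp : p.Prime) (a n : ℕ) : qFactPrimeTo p a n ≠ 0 :=
  fun h => qFactPrimeTo_notMem_pqIdeal hp a n (h ▸ (pqIdeal p).zero_mem)

lemma ι_ne_zero {x : Zq} (hx : x ≠ 0) : ι x ≠ 0 :=
  (map_ne_zero_iff ι (IsFractionRing.injective Zq Qq)).mpr hx

/-- `(p)_q^k ⬝ (k)_{q^p}! ⬝ (⌊pk/p^m⌋)_{q^{p^m}}! / ((⌊k/p^m⌋)_{q^{p^{m+1}}}! ⬝ (pk)_q!)`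
lies in `ℤ[q]_{(p,q-1)}`. -/
theorem stmt7 (p : ℕ) (hp : p.Prime) (m k : ℕ) :
    InLoc p (ι (qInt 1 p) ^ k * ι (qFact p k) * ι (qFact (p ^ m) (p * k / p ^ m)) *
      (ι (qFact (p ^ (m + 1)) (k / p ^ m)) * ι (qFact 1 (p * k)))⁻¹) := by
  have hdiv : p * k / p ^ m / p = k / p ^ m := by
    rw [Nat.div_div_eq_div_mul, mul_comm p k, Nat.mul_div_mul_right _ _ hp.pos]
  have hsmall := qFact_eq_qInt_pow_mul_qFact_mul_qFactPrimeTo p 1 (p * k)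
  rw [one_mul, Nat.mul_div_cancel_left k hp.pos] at hsmall
  have hlarge := qFact_eq_qInt_pow_mul_qFact_mul_qFactPrimeTo p (p ^ m) (p * k / p ^ m)
  rw [hdiv, ← pow_succ] at hlarge
  refine ⟨qInt (p ^ m) p ^ (k / p ^ m) * qFactPrimeTo p (p ^ m) (p * k / p ^ m),
    qFactPrimeTo p 1 (p * k), qFactPrimeTo_notMem_pqIdeal hp 1 (p * k), ?_⟩
  have := ι_ne_zero (qInt_ne_zero 1 hp.ne_zero)
  have := ι_ne_zero (qFact_ne_zero p k)
  have := ι_ne_zero (qFact_ne_zero (p ^ (m + 1)) (k / p ^ m))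
  have := ι_ne_zero (qFactPrimeTo_ne_zero hp 1 (p * k))
  rw [hsmall, hlarge]
  simp only [map_mul, map_pow]
  field_simp
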